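/- arXiv:2005.08617 — 3 statements merged into one kernel-verified Lean document; each statement's English description precedes it below -/
import Mathlib

section
/- For any degrees 2 ≤ i ≤ d-2, there exist homogeneous polynomials f of degree i and g of degree d-i in n+1 variables (e.g., Fermat polynomials) such that f·g has strength 1 but slice rank ⌈(n+1)/2⌉; in particular, the gap between slice rank and strength of reducible forms is unbounded as n → ∞. -/
/-!
Take `f` and `g` to be Fermat forms `∑ xᵢ ^ j`. Their product has strength one by definition.
For the slice rank, pairing the variables and factoring `x ^ j + y ^ j = (x - ζ y) * h` with
`ζ ^ j = -1` shows that each Fermat form lies in the ideal of `⌈(n+1)/2⌉` linear forms.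
Conversely, if `f * g` lies in the ideal of `r` linear forms, it vanishes on their common kernel
`W`, of codimension at most `r`; since polynomial functions on a vector space form a domain, `f`
or `g` vanishes on `W`. If a Fermat form of degree `j ≥ 2` vanishes on `W`, then by polarization
`∑ u x * w x ^ (j - 1) = 0` for all `u, w ∈ W`, so `W` is orthogonal to the span of the powers
`w ^ (j - 1)`, which has dimension at least `dim W` (choose coordinates on which `W` projects
onto `k ^ dim W`). Hence `2 dim W ≤ n + 1`, and `r ≥ ⌈(n+1)/2⌉`.
-/

open MvPolynomial

noncomputable def sliceRank {k : Type*} [Field k] {σ : Type*} (d : ℕ)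
    (f : MvPolynomial σ k) : ℕ :=
  sInf {r : ℕ | ∃ ℓ g : Fin r → MvPolynomial σ k,
    (∀ i, (ℓ i).IsHomogeneous 1) ∧ (∀ i, (g i).IsHomogeneous (d - 1)) ∧
    f = ∑ i, ℓ i * g i}

noncomputable def strength {k : Type*} [Field k] {σ : Type*} (d : ℕ)
    (f : MvPolynomial σ k) : ℕ :=
  sInf {r : ℕ | ∃ (g h : Fin r → MvPolynomial σ k) (e : Fin r → ℕ),
    (∀ i, 1 ≤ e i ∧ e i ≤ d - 1) ∧
    (∀ i, (g i).IsHomogeneous (e i)) ∧ (∀ i, (h i).IsHomogeneous (d - e i)) ∧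
    f = ∑ i, g i * h i}

open Module Submodule

noncomputable def fermat (k ι : Type*) [CommSemiring k] [Fintype ι] (j : ℕ) : MvPolynomial ι k :=
  ∑ x, X x ^ j

section

variable {k ι : Type*} [Field k]

def VanishesOn (p : MvPolynomial ι k) (W : Submodule k (ι → k)) : Prop :=
  ∀ v ∈ W, eval v p = 0

lemma eval_fermat [Fintype ι] (j : ℕ) (v : ι → k) : eval v (fermat k ι j) = ∑ x, v x ^ j := by
  simp [fermat]

lemma isHomogeneous_fermat [Fintype ι] {j : ℕ} : (fermat k ι j).IsHomogeneous j :=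
  IsHomogeneous.sum _ _ _ fun x _ => isHomogeneous_X_pow x j

lemma fermat_ne_zero [Fintype ι] [Nonempty ι] {j : ℕ} (hj : j ≠ 0) : fermat k ι j ≠ 0 := by
  classical
  intro h
  obtain ⟨x⟩ := ‹Nonempty ι›
  have := congrArg (eval (Pi.single x 1)) h
  simp [eval_fermat, Pi.single_apply, ite_pow, zero_pow hj] at this

lemma strength_mul_eq_one {σ : Type*} {d e : ℕ} {f g : MvPolynomial σ k}
    (hf : f.IsHomogeneous e) (hg : g.IsHomogeneous (d - e)) (he : 1 ≤ e) (hed : e ≤ d - 1)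
    (hfg : f * g ≠ 0) : strength d (f * g) = 1 := by
  refine IsLeast.csInf_eq ⟨⟨fun _ => f, fun _ => g, fun _ => e, fun _ => ⟨he, hed⟩,
    fun _ => hf, fun _ => hg, by simp⟩, ?_⟩
  rintro r ⟨_, _, _, -, -, -, h⟩
  refine Nat.one_le_iff_ne_zero.2 ?_
  rintro rfl
  exact hfg (by simpa using h)

lemma exists_sum_pow_eq_linear_mul [IsAlgClosed k] {j : ℕ} (hj : j ≠ 0) {s : Finset ι}
    (hs : s.card ≤ 2) : ∃ ℓ q : MvPolynomial ι k,
      ℓ.IsHomogeneous 1 ∧ q.IsHomogeneous (j - 1) ∧ ∑ x ∈ s, X x ^ j = ℓ * q := by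
  classical
  obtain hs | hs | hs : s.card = 0 ∨ s.card = 1 ∨ s.card = 2 := by omega
  · refine ⟨0, 0, isHomogeneous_zero _ _ _, isHomogeneous_zero _ _ _, ?_⟩
    simp [Finset.card_eq_zero.1 hs]
  · obtain ⟨a, rfl⟩ := Finset.card_eq_one.1 hs
    refine ⟨X a, X a ^ (j - 1), isHomogeneous_X _ _, isHomogeneous_X_pow _ _, ?_⟩
    rw [Finset.sum_singleton, ← pow_succ', Nat.sub_add_cancel (by omega)]
  · obtain ⟨a, b, hab, rfl⟩ := Finset.card_eq_two.1 hs
    obtain ⟨c, hc⟩ := IsAlgClosed.exists_pow_nat_eq (-1 : k) (Nat.pos_of_ne_zero hj)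
    refine ⟨X a - C c * X b, ∑ p ∈ Finset.range j, X a ^ p * (C c * X b) ^ (j - 1 - p),
      (isHomogeneous_X _ _).sub (isHomogeneous_C_mul_X _ _), ?_, ?_⟩
    · refine IsHomogeneous.sum _ _ _ fun p hp => ?_
      convert (isHomogeneous_X_pow a p).mul ((isHomogeneous_C_mul_X c b).pow (j - 1 - p)) using 1
      have := Finset.mem_range.1 hp
      omega
    · rw [Finset.sum_pair hab, mul_comm, geom_sum₂_mul, mul_pow, ← map_pow, hc, map_neg,
        map_one]
      ring

theorem exists_fermat_eq_sum_linear_mul [Fintype ι] [IsAlgClosed k] {j : ℕ} (hj : j ≠ 0) :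
    ∃ ℓ q : Fin ((Fintype.card ι + 1) / 2) → MvPolynomial ι k,
      (∀ m, (ℓ m).IsHomogeneous 1) ∧ (∀ m, (q m).IsHomogeneous (j - 1)) ∧
      fermat k ι j = ∑ m, ℓ m * q m := by
  classical
  let e := Fintype.equivFin ι
  let π (x : ι) : Fin ((Fintype.card ι + 1) / 2) := ⟨(e x : ℕ) / 2, by have := (e x).isLt; omega⟩
  have hfiber (m) : (Finset.univ.filter fun x => π x = m).card ≤ 2 := by
    calc _ ≤ (Finset.range 2).card := by
          refine Finset.card_le_card_of_injOn (fun x => (e x : ℕ) % 2)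
            (fun x _ => by simp; omega) fun x hx y hy hxy => e.injective (Fin.ext ?_)
          simp [π, Fin.ext_iff] at hx hy hxy
          omega
      _ = 2 := Finset.card_range 2
  choose ℓ q hℓ hq hsum using fun m => exists_sum_pow_eq_linear_mul (k := k) hj (hfiber m)
  refine ⟨ℓ, q, hℓ, hq, ?_⟩
  rw [fermat, ← Finset.sum_fiberwise Finset.univ π]
  exact Finset.sum_congr rfl fun m _ => hsum m

lemma MvPolynomial.IsHomogeneous.eval_eq_dotProduct [Fintype ι] {p : MvPolynomial ι k}
    (hp : p.IsHomogeneous 1) (v : ι → k) :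
    eval v p = (fun x => coeff (Finsupp.single x 1) p) ⬝ᵥ v := by
  classical
  have hspan : p ∈ span k (Set.range X) := by
    rw [← homogeneousSubmodule_one_eq_span_X]; exact hp
  clear hp
  induction hspan using Submodule.span_induction with
  | mem _ h =>
    obtain ⟨y, rfl⟩ := h
    simp [coeff_X, dotProduct, Finsupp.single_left_inj]
  | zero => simp
  | add p q _ _ hp hq => simp [hp, hq, dotProduct, add_mul, Finset.sum_add_distrib]
  | smul a p _ hp => simp [hp, dotProduct, Finset.mul_sum, mul_assoc]

lemma exists_vanishesOn_sum_linear_mul [Fintype ι] {r : ℕ} (ℓ q : Fin r → MvPolynomial ι k)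
    (hℓ : ∀ m, (ℓ m).IsHomogeneous 1) :
    ∃ W : Submodule k (ι → k), Fintype.card ι ≤ finrank k W + r ∧
      VanishesOn (∑ m, ℓ m * q m) W := by
  let A : Matrix (Fin r) ι k := Matrix.of fun m x => coeff (Finsupp.single x 1) (ℓ m)
  refine ⟨LinearMap.ker A.mulVecLin, ?_, fun v hv => ?_⟩
  · have := LinearMap.finrank_range_add_finrank_ker A.mulVecLin
    have := (LinearMap.range A.mulVecLin).finrank_le
    simp only [finrank_fintype_fun_eq_card, Fintype.card_fin] at *
    omega
  · have hℓv : ∀ m, eval v (ℓ m) = 0 := fun m => by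
      rw [(hℓ m).eval_eq_dotProduct]; exact congrFun hv m
    simp [hℓv]

lemma eval_bind₁_sum_C_mul_X {κ : Type*} [Fintype κ] (w : κ → ι → k) (a : κ → k)
    (p : MvPolynomial ι k) :
    eval a (bind₁ (fun x => ∑ s, C (w s x) * X s) p) = eval (∑ s, a s • w s) p := by
  rw [eval, eval₂Hom_bind₁]
  change eval (fun x => eval a (∑ s, C (w s x) * X s)) p = _
  congr 2
  funext x
  simp [mul_comm]

theorem vanishesOn_mul_iff [Fintype ι] [Infinite k] {p q : MvPolynomial ι k}
    {W : Submodule k (ι → k)} :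
    VanishesOn (p * q) W ↔ VanishesOn p W ∨ VanishesOn q W := by
  refine ⟨fun h => ?_, ?_⟩
  · let B := finBasis k W
    let ψ : MvPolynomial ι k →ₐ[k] MvPolynomial (Fin (finrank k W)) k :=
      bind₁ fun x => ∑ s, C ((B s : ι → k) x) * X s
    have hψ (p : MvPolynomial ι k) (a) : eval a (ψ p) = eval (∑ s, a s • (B s : ι → k)) p :=
      eval_bind₁_sum_C_mul_X _ a p
    have hmem (a : Fin (finrank k W) → k) : ∑ s, a s • (B s : ι → k) ∈ W :=
      W.sum_mem fun s _ => W.smul_mem _ (B s).2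
    have hrepr (v : ι → k) (hv : v ∈ W) : ∑ s, B.repr ⟨v, hv⟩ s • (B s : ι → k) = v := by
      have := congrArg W.subtype (B.sum_repr ⟨v, hv⟩)
      simpa only [map_sum, map_smul, subtype_apply] using this
    have hzero : ψ p * ψ q = 0 := MvPolynomial.funext fun a => by
      rw [← map_mul, hψ, map_zero, h _ (hmem a)]
    refine (mul_eq_zero.1 hzero).imp (fun hp v hv => ?_) (fun hq v hv => ?_)
    · rw [← hrepr v hv, ← hψ, hp, map_zero]
    · rw [← hrepr v hv, ← hψ, hq, map_zero]
  · rintro (h | h) v hv <;> simp [h v hv]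

lemma dotProduct_pow_eq_zero_of_vanishesOn_fermat [Fintype ι] [CharZero k] {j : ℕ} (hj : j ≠ 0)
    {W : Submodule k (ι → k)} (h : VanishesOn (fermat k ι j) W) {u w : ι → k} (hu : u ∈ W)
    (hw : w ∈ W) : u ⬝ᵥ w ^ (j - 1) = 0 := by
  let P : Polynomial k :=
    ∑ x, (Polynomial.C (w x) + Polynomial.X * Polynomial.C (u x)) ^ j
  have hP : P = 0 := Polynomial.funext fun c => by
    have := h (w + c • u) (W.add_mem hw (W.smul_mem c hu))
    simpa [P, eval_fermat, Polynomial.eval_finsetSum, mul_comm c] using this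
  have hderiv : (j : k) * (u ⬝ᵥ w ^ (j - 1)) = 0 := by
    have := congrArg (fun P => (Polynomial.derivative P).eval 0) hP
    simp [P, Polynomial.derivative_pow, Polynomial.eval_finsetSum, dotProduct,
      Finset.mul_sum] at this ⊢
    rw [← this]
    exact Finset.sum_congr rfl fun x _ => by ring
  exact (mul_eq_zero.1 hderiv).resolve_left (Nat.cast_ne_zero.2 hj)

theorem Submodule.exists_coords_surjective [Fintype ι] (W : Submodule k (ι → k)) :
    ∃ σ : Fin (finrank k W) → ι, ∀ c : Fin (finrank k W) → k, ∃ v ∈ W, v ∘ σ = c := by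
  let ev (x : ι) : Dual k W := (LinearMap.proj x).comp W.subtype
  obtain ⟨κ, a, ha, hspan, hli⟩ := exists_linearIndependent' k ev
  have : Finite κ := Finite.of_injective a ha
  have : Fintype κ := Fintype.ofFinite κ
  let res : W →ₗ[k] κ → k := LinearMap.pi fun c => ev (a c)
  have hinj : Function.Injective res := by
    rw [← LinearMap.ker_eq_bot, LinearMap.ker_eq_bot']
    intro v hv
    have hle : span k (Set.range (ev ∘ a)) ≤ LinearMap.ker (Dual.eval k W v) := by
      rw [span_le]
      rintro _ ⟨c, rfl⟩
      exact congrFun hv c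
    rw [hspan] at hle
    ext x
    exact hle (subset_span ⟨x, rfl⟩)
  have hcard : Fintype.card κ = finrank k W := le_antisymm
    (hli.fintype_card_le_finrank.trans (Subspace.dual_finrank_eq).le)
    (by simpa using LinearMap.finrank_le_finrank_of_injective hinj)
  have hsurj : Function.Surjective res :=
    (LinearMap.injective_iff_surjective_of_finrank_eq_finrank (by simp [hcard])).1 hinj
  let e := Fintype.equivFinOfCardEq hcard
  refine ⟨a ∘ e.symm, fun c => ?_⟩
  obtain ⟨v, hv⟩ := hsurj (c ∘ e)
  refine ⟨v, v.2, funext fun b => ?_⟩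
  simpa [res, ev] using congrFun hv (e.symm b)

theorem two_mul_finrank_le_of_vanishesOn_fermat [Fintype ι] [CharZero k] {j : ℕ} (hj : 2 ≤ j)
    {W : Submodule k (ι → k)} (h : VanishesOn (fermat k ι j) W) :
    2 * finrank k W ≤ Fintype.card ι := by
  classical
  obtain ⟨σ, hσ⟩ := W.exists_coords_surjective
  choose w hwW hwσ using fun b => hσ (Pi.single b 1)
  let P : Matrix (Fin (finrank k W)) ι k := Matrix.of fun b => w b ^ (j - 1)
  have hker : W ≤ LinearMap.ker P.mulVecLin := fun u hu => funext fun b =>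
    (dotProduct_comm _ _).trans
      (dotProduct_pow_eq_zero_of_vanishesOn_fermat (by omega) h hu (hwW b))
  have hrange : LinearMap.range P.mulVecLin = ⊤ := by
    rw [eq_top_iff, ← (Pi.basisFun k _).span_eq, span_le]
    rintro _ ⟨b, rfl⟩
    refine ⟨Pi.single (σ b) 1, funext fun b' => ?_⟩
    have := congrFun (hwσ b') b
    simp only [Function.comp_apply, Pi.single_apply] at this
    rcases eq_or_ne b b' with rfl | hbb
    · simp [P, this]
    · simp [P, this, hbb, hbb.symm, zero_pow (show j - 1 ≠ 0 by omega)]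
  have := LinearMap.finrank_range_add_finrank_ker P.mulVecLin
  rw [hrange, finrank_top, finrank_fintype_fun_eq_card, finrank_fintype_fun_eq_card,
    Fintype.card_fin] at this
  have := Submodule.finrank_mono hker
  omega

theorem sliceRank_fermat_mul_fermat [Fintype ι] [IsAlgClosed k] [CharZero k] {d i j : ℕ}
    (hi : 2 ≤ i) (hj : 2 ≤ j) (hd : i + j = d) :
    sliceRank d (fermat k ι i * fermat k ι j) = (Fintype.card ι + 1) / 2 := by
  obtain ⟨ℓ, q, hℓ, hq, hf⟩ :=
    exists_fermat_eq_sum_linear_mul (k := k) (ι := ι) (j := i) (by omega)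
  refine IsLeast.csInf_eq ⟨⟨ℓ, fun m => q m * fermat k ι j, hℓ, fun m => ?_, ?_⟩, ?_⟩
  · convert (hq m).mul isHomogeneous_fermat using 1
    omega
  · simp [hf, Finset.sum_mul, mul_assoc]
  · rintro r ⟨ℓ', q', hℓ', -, h⟩
    obtain ⟨W, hWr, hW⟩ := exists_vanishesOn_sum_linear_mul ℓ' q' hℓ'
    rw [← h] at hW
    have := (vanishesOn_mul_iff.1 hW).elim (two_mul_finrank_le_of_vanishesOn_fermat hi)
      (two_mul_finrank_le_of_vanishesOn_fermat hj)
    omega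

end

theorem gap_strength_sliceRank_general {k : Type*} [Field k] [IsAlgClosed k] [CharZero k]
    {n d i : ℕ} (hi : 2 ≤ i) (hid : i ≤ d - 2) :
    ∃ f g : MvPolynomial (Fin (n + 1)) k,
      f.IsHomogeneous i ∧ g.IsHomogeneous (d - i) ∧
      strength d (f * g) = 1 ∧ sliceRank d (f * g) = (n + 2) / 2 := by
  refine ⟨fermat k _ i, fermat k _ (d - i), isHomogeneous_fermat, isHomogeneous_fermat,
    strength_mul_eq_one isHomogeneous_fermat isHomogeneous_fermat (by omega) (by omega)
      (mul_ne_zero (fermat_ne_zero (by omega : i ≠ 0))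
        (fermat_ne_zero (by omega : d - i ≠ 0))), ?_⟩
  have := sliceRank_fermat_mul_fermat (k := k) (ι := Fin (n + 1)) (d := d) hi (j := d - i)
    (by omega) (by omega)
  rwa [Fintype.card_fin] at this

/-- For any `2 ≤ i ≤ d - 2`, there are forms `f` of degree `i` and `g` of degree `d - i`
such that `f * g` has strength `1` but slice rank `⌈(n+1)/2⌉`. -/
theorem gap_strength_sliceRank {k : Type*} [Field k] [IsAlgClosed k] [CharZero k]
    {n d i : ℕ} (hi : 2 ≤ i) (hid : i ≤ d - 2) (hd : 4 ≤ d) :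
    ∃ f g : MvPolynomial (Fin (n + 1)) k,
      f.IsHomogeneous i ∧ g.IsHomogeneous (d - i) ∧
      strength d (f * g) = 1 ∧ sliceRank d (f * g) = (n + 2) / 2 :=
  gap_strength_sliceRank_general hi hid
end

section
/- Let n ≥ 1, d ≥ 4 with n ≥ (1/d!)·max{d^{d−1}, ((d−1)!)^{(d−1)/(d−3)}}, and let a be the unique positive root of p(x) = (x+d)⋯(x+2) − d!·(n−x). Then a > (d!·n)^{1/(d−1)} − (d+2). -/
/-!
Put `y = (d!·n)^{1/(d-1)}`, so that `y ≥ d` and `(d-1)! ≤ y^{d-3}` by the two halves of the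
hypothesis on `n`. At `x₀ = y - (d+2)` every factor `x₀ + m` with `3 ≤ m ≤ d` is at most `y`, and
`x₀ + 2 = y - d`, so `p(x₀) ≤ (y - d)·y^{d-2} - d!·(n - x₀) = d·y·((d-1)! - y^{d-3}) - d!·(d+2) < 0`.
As `p` is strictly increasing on `[-2, ∞)` and vanishes at `a`, this forces `x₀ < a`.
-/

open Finset
open scoped Nat

/-- The polynomial `p` of the statement. -/
def rootPoly (d : ℕ) (n x : ℝ) : ℝ :=
  ∏ m ∈ Icc 2 d, (x + m) - d ! * (n - x)

theorem rootPoly_strictMonoOn (d : ℕ) (n : ℝ) : StrictMonoOn (rootPoly d n) (Set.Ici (-2)) := by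
  intro x hx x' _ hxx'
  have hprod : ∏ m ∈ Icc 2 d, (x + m) ≤ ∏ m ∈ Icc 2 d, (x' + m) := by
    refine prod_le_prod (fun m hm => ?_) (fun m _ => by linarith)
    have : (2 : ℝ) ≤ m := by exact_mod_cast (mem_Icc.1 hm).1
    linarith [Set.mem_Ici.1 hx]
  have hD : (0 : ℝ) < d ! := by positivity
  unfold rootPoly
  nlinarith

theorem prod_Icc_two_add_le {d : ℕ} (hd : 2 ≤ d) {x : ℝ} (hx : -2 ≤ x) :
    ∏ m ∈ Icc 2 d, (x + m) ≤ (x + 2) * (x + d) ^ (d - 2) := by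
  rw [← Ioc_insert_left hd, prod_insert left_notMem_Ioc, ← Nat.card_Ioc 2 d, ← prod_const,
    Nat.cast_ofNat]
  refine mul_le_mul_of_nonneg_left (prod_le_prod (fun m hm => ?_) (fun m hm => ?_)) (by linarith)
  · have : (2 : ℝ) ≤ m := by exact_mod_cast (mem_Ioc.1 hm).1.le
    linarith
  · have : (m : ℝ) ≤ d := by exact_mod_cast (mem_Ioc.1 hm).2
    linarith

theorem rootPoly_neg {d : ℕ} (hd : 3 ≤ d) {n y : ℝ} (hdy : d ≤ y)
    (hpow : y ^ (d - 1) = d ! * n) (hfact : ((d - 1) ! : ℝ) ≤ y ^ (d - 3)) :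
    rootPoly d n (y - (d + 2)) < 0 := by
  have hd3 : (3 : ℝ) ≤ d := by exact_mod_cast hd
  have hD : (d ! : ℝ) = d * (d - 1) ! := by
    rw [← Nat.cast_mul, Nat.mul_factorial_pred (by omega)]
  have hpow₁ : y ^ (d - 1) = y * y ^ (d - 2) := by rw [← pow_succ']; congr 1; omega
  have hpow₂ : y ^ (d - 2) = y * y ^ (d - 3) := by rw [← pow_succ']; congr 1; omega
  have hprod : ∏ m ∈ Icc 2 d, (y - (d + 2) + m) ≤ (y - d) * y ^ (d - 2) := by
    calc ∏ m ∈ Icc 2 d, (y - (d + 2) + m)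
        ≤ (y - (d + 2) + 2) * (y - (d + 2) + d) ^ (d - 2) :=
          prod_Icc_two_add_le (by omega) (by linarith)
      _ ≤ (y - d) * y ^ (d - 2) := by
          rw [show y - (d + 2) + 2 = y - d by ring, show y - (d + 2) + d = y - 2 by ring]
          gcongr <;> linarith
  have hgap : d * y * (((d - 1) ! : ℝ) - y ^ (d - 3)) ≤ 0 :=
    mul_nonpos_of_nonneg_of_nonpos (by nlinarith) (by linarith)
  calc rootPoly d n (y - (d + 2))
      ≤ (y - d) * y ^ (d - 2) - d ! * (n - (y - (d + 2))) := by
        unfold rootPoly; linarith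
    _ = d * y * (((d - 1) ! : ℝ) - y ^ (d - 3)) - d ! * (d + 2) := by
        linear_combination hpow - hpow₁ - (d : ℝ) * hpow₂ + y * hD
    _ < 0 := by
        have : (0 : ℝ) < d ! * (d + 2) := by positivity
        linarith

theorem le_rpow_one_div_rpow_of_rpow_div_le {c N p q : ℝ} (hc : 0 ≤ c) (hN : 0 ≤ N)
    (hp : 0 < p) (hq : 0 < q) (h : c ^ (p / q) ≤ N) : c ≤ (N ^ (1 / p)) ^ q := by
  rw [← Real.rpow_mul hN, one_div_mul_eq_div, ← inv_div]
  exact (Real.le_rpow_inv_iff_of_pos hc hN (div_pos hp hq)).2 h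

theorem root_lower_bound_general (n d : ℕ) (hd : 4 ≤ d)
    (hbig : ((1 : ℝ) / (d.factorial : ℝ)) *
        max ((d : ℝ) ^ ((d : ℝ) - 1))
          (((d - 1).factorial : ℝ) ^ (((d : ℝ) - 1) / ((d : ℝ) - 3))) ≤ (n : ℝ))
    (a : ℝ) (ha : 0 < a)
    (hroot : (∏ m ∈ Finset.Icc 2 d, (a + (m : ℝ)))
      - (d.factorial : ℝ) * ((n : ℝ) - a) = 0) :
    ((d.factorial : ℝ) * n) ^ ((1 : ℝ) / ((d : ℝ) - 1)) - ((d : ℝ) + 2) < a := by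
  have hd4 : (4 : ℝ) ≤ d := by exact_mod_cast hd
  rw [one_div_mul_eq_div, div_le_iff₀ (by positivity), mul_comm, max_le_iff] at hbig
  obtain ⟨hpow_le, hfact_le⟩ := hbig
  have hN : 0 ≤ (d ! : ℝ) * n := by positivity
  set y := ((d ! : ℝ) * n) ^ ((1 : ℝ) / ((d : ℝ) - 1)) with hy
  have hdy : (d : ℝ) ≤ y := by
    rw [hy, one_div]
    exact (Real.le_rpow_inv_iff_of_pos (by positivity) hN (by linarith)).2 hpow_le
  have hcast (k : ℕ) (hk : k ≤ d) : ((d - k : ℕ) : ℝ) = d - k := Nat.cast_sub hk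
  have hpow : y ^ (d - 1) = d ! * n := by
    rw [← Real.rpow_natCast, hcast 1 (by omega), Nat.cast_one, ← Real.rpow_mul hN,
      one_div_mul_cancel (by linarith), Real.rpow_one]
  have hfact : ((d - 1) ! : ℝ) ≤ y ^ (d - 3) := by
    rw [← Real.rpow_natCast, hcast 3 (by omega), Nat.cast_ofNat]
    exact le_rpow_one_div_rpow_of_rpow_div_le (by positivity) hN (by linarith) (by linarith)
      hfact_le
  have hx₀ : y - (d + 2) ∈ Set.Ici (-2 : ℝ) := by simp only [Set.mem_Ici]; linarith
  have ha' : a ∈ Set.Ici (-2 : ℝ) := by simp only [Set.mem_Ici]; linarith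
  exact ((rootPoly_strictMonoOn d n).lt_iff_lt hx₀ ha').1
    ((rootPoly_neg (by omega) hdy hpow hfact).trans_eq hroot.symm)

/-- For `d ≥ 4` and `n ≥ (1/d!)·max{d^{d−1}, ((d−1)!)^{(d−1)/(d−3)}}`, the unique
positive root `a` of `p(x) = (x+d)⋯(x+2) − d!·(n−x)` satisfies
`a > (d!·n)^{1/(d−1)} − (d+2)`. -/
theorem root_lower_bound (n d : ℕ) (hn : 1 ≤ n) (hd : 4 ≤ d)
    (hbig : ((1 : ℝ) / (d.factorial : ℝ)) *
        max ((d : ℝ) ^ ((d : ℝ) - 1))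
          (((d - 1).factorial : ℝ) ^ (((d : ℝ) - 1) / ((d : ℝ) - 3))) ≤ (n : ℝ))
    (a : ℝ) (ha : 0 < a)
    (hroot : (∏ m ∈ Finset.Icc 2 d, (a + (m : ℝ)))
      - (d.factorial : ℝ) * ((n : ℝ) - a) = 0) :
    ((d.factorial : ℝ) * n) ^ ((1 : ℝ) / ((d : ℝ) - 1)) - ((d : ℝ) + 2) < a :=
  root_lower_bound_general n d hd hbig a ha hroot
end

section
/- For all n ≥ 1, the general slice rank satisfies sl.rk°_{n,d} ≤ sl.rk°_{n+1,d} ≤ sl.rk°_{n,d} + 1, where sl.rk°_{n,d} = min{ r ≥ 0 : r(n+1−r) ≥ C(d+n−r, d) }; consequently n ↦ n − sl.rk°_{n,d} + 1 is non-decreasing in n. -/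
/-!
Write `m = d + n − r`. If `r` satisfies the defining inequality for `n`, then `r + 1` satisfies
it for `n + 1`: both `C(d + n − r, d)` and `n + 1 − r` are unchanged. Conversely, if `r` satisfies
it for `n + 1`, i.e. `C(m + 1, d) ≤ r (m + 2 − d)`, then the identity
`C(m, d) (m + 1) = C(m + 1, d) (m + 1 − d)` gives `C(m, d) ≤ r (m + 1 − d)`, so `r` works for `n`.
-/

/-- The general slice rank `sl.rk°_{n,d} = min { r : r(n+1−r) ≥ C(d+n−r, d) }`. -/
noncomputable def genSliceRank (n d : ℕ) : ℕ :=
  sInf {r : ℕ | Nat.choose (d + n - r) d ≤ r * (n + 1 - r)}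

def SliceRankBound (n d r : ℕ) : Prop :=
  Nat.choose (d + n - r) d ≤ r * (n + 1 - r)

theorem Nat.choose_le_mul_of_succ_choose_le {m d a : ℕ} (hd : 0 < d)
    (h : (m + 1).choose d ≤ a * (m + 2 - d)) : m.choose d ≤ a * (m + 1 - d) := by
  refine Nat.le_of_mul_le_mul_right ?_ m.succ_pos
  calc m.choose d * (m + 1) = (m + 1).choose d * (m + 1 - d) := Nat.choose_mul_succ_eq m d
    _ ≤ a * (m + 2 - d) * (m + 1 - d) := Nat.mul_le_mul_right _ h
    _ = a * (m + 1 - d) * (m + 2 - d) := by ring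
    _ ≤ a * (m + 1 - d) * (m + 1) := Nat.mul_le_mul_left _ (by omega)

namespace SliceRankBound

variable {n d r : ℕ}

theorem of_succ_le (hd : 0 < d) (hr : n + 1 ≤ r) : SliceRankBound n d r := by
  simp [SliceRankBound, Nat.choose_eq_zero_of_lt (show d + n - r < d by omega)]

theorem succ_succ (h : SliceRankBound n d r) : SliceRankBound (n + 1) d (r + 1) := by
  unfold SliceRankBound at h ⊢
  rw [show d + (n + 1) - (r + 1) = d + n - r by omega,
    show n + 1 + 1 - (r + 1) = n + 1 - r by omega]
  exact h.trans (Nat.mul_le_mul_right _ r.le_succ)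

theorem of_succ (hd : 0 < d) (h : SliceRankBound (n + 1) d r) : SliceRankBound n d r := by
  rcases le_or_gt (n + 1) r with hr | hr
  · exact of_succ_le hd hr
  unfold SliceRankBound at h ⊢
  rw [show d + (n + 1) - r = d + n - r + 1 by omega,
    show n + 1 + 1 - r = d + n - r + 2 - d by omega] at h
  rw [show n + 1 - r = d + n - r + 1 - d by omega]
  exact Nat.choose_le_mul_of_succ_choose_le hd h

end SliceRankBound

theorem genSliceRank_le {n d r : ℕ} (h : SliceRankBound n d r) : genSliceRank n d ≤ r :=
  Nat.sInf_le h

theorem sliceRankBound_genSliceRank {n d : ℕ} (hd : 0 < d) :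
    SliceRankBound n d (genSliceRank n d) :=
  Nat.sInf_mem (s := {r | SliceRankBound n d r}) ⟨n + 1, SliceRankBound.of_succ_le hd le_rfl⟩

theorem genSliceRank_monotone_general (n d : ℕ) (hd : 3 ≤ d) :
    genSliceRank n d ≤ genSliceRank (n + 1) d ∧
    genSliceRank (n + 1) d ≤ genSliceRank n d + 1 ∧
    (n : ℤ) - genSliceRank n d + 1 ≤ ((n : ℤ) + 1) - genSliceRank (n + 1) d + 1 := by
  have hd₀ : 0 < d := by omega
  have lower : genSliceRank n d ≤ genSliceRank (n + 1) d :=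
    genSliceRank_le ((sliceRankBound_genSliceRank hd₀).of_succ hd₀)
  have upper : genSliceRank (n + 1) d ≤ genSliceRank n d + 1 :=
    genSliceRank_le (sliceRankBound_genSliceRank hd₀).succ_succ
  exact ⟨lower, upper, by omega⟩

/-- `sl.rk°_{n,d} ≤ sl.rk°_{n+1,d} ≤ sl.rk°_{n,d} + 1`; consequently
`n ↦ n − sl.rk°_{n,d} + 1` is non-decreasing in `n`. -/
theorem genSliceRank_monotone (n d : ℕ) (hn : 1 ≤ n) (hd : 3 ≤ d) :
    genSliceRank n d ≤ genSliceRank (n + 1) d ∧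
    genSliceRank (n + 1) d ≤ genSliceRank n d + 1 ∧
    (n : ℤ) - genSliceRank n d + 1 ≤ ((n : ℤ) + 1) - genSliceRank (n + 1) d + 1 :=
  genSliceRank_monotone_general n d hd
end
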